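/- Let p : E → B and p' : E' → B' be fibrations, and suppose f' : E' → E and f : B' → B make the square p ∘ f' ≃ f ∘ p' commute up to homotopy. If f admits a right homotopy inverse, then secat_m(p) ≤ secat_m(p'). If moreover f is a homotopy equivalence and f' admits a right homotopy inverse, then secat_m(p) = secat_m(p'). In particular, secat_m is a fibre-preserving homotopy invariant of fibrations. -/

import Mathlib

universe u

/-- A (bundled) CW complex, in the categorical sense: a space with a CW structure. -/
structure CWComplex where
  X : TopCat.{u}
  cw : TopCat.CWComplex X

/-- The underlying topological space of a CW complex. -/
abbrev CWSpace (K : CWComplex.{u}) : Type u := K.X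

/-- A CW complex has dimension at most `m` if it has no cells of dimension `> m`. -/
def CWDimLE (K : CWComplex.{u}) (m : ℕ) : Prop :=
  ∀ n : ℕ, m < n →
    IsEmpty (K.cw.attachCells n (not_isMax n)).ι

/-- Hurewicz fibration: the homotopy lifting property with respect to all spaces. -/
def IsFibration {E B : Type u} [TopologicalSpace E] [TopologicalSpace B] (p : C(E, B)) : Prop :=
  ∀ (X : Type u) [TopologicalSpace X] (f : C(X, E)) (H : C(X × unitInterval, B)),
    (∀ x, H (x, 0) = p (f x)) →
    ∃ H' : C(X × unitInterval, E), (∀ z, p (H' z) = H z) ∧ (∀ x, H' (x, 0) = f x)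

/-- The inclusion of a subset as a continuous map. -/
def inclMap {X : Type u} [TopologicalSpace X] (U : Set X) : C(U, X) :=
  ⟨Subtype.val, continuous_subtype_val⟩

/-- Property `A_{m,p}`: every map into `U` from an `m`-dimensional CW complex lifts through `p`. -/
def LiftingProp {E B : Type u} [TopologicalSpace E] [TopologicalSpace B]
    (p : C(E, B)) (m : ℕ) (U : Set B) : Prop :=
  ∀ K : CWComplex.{u}, CWDimLE K m → ∀ φ : C(CWSpace K, U),
    ∃ s : C(CWSpace K, E), ∀ x, p (s x) = (φ x : B)

/-- The `m`-sectional category of `p`, valued in `ℕ∞` (`⊤` if no finite cover exists). -/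
noncomputable def secatm {E B : Type u} [TopologicalSpace E] [TopologicalSpace B]
    (p : C(E, B)) (m : ℕ) : ℕ∞ :=
  sInf ((fun n : ℕ => (n : ℕ∞)) ''
    {k : ℕ | ∃ U : Fin (k + 1) → Set B, (∀ i, IsOpen (U i)) ∧ (⋃ i, U i) = Set.univ ∧
      ∀ i, LiftingProp p m (U i)})

/-- The classical sectional category. -/
noncomputable def secat {E B : Type u} [TopologicalSpace E] [TopologicalSpace B]
    (p : C(E, B)) : ℕ∞ :=
  sInf ((fun n : ℕ => (n : ℕ∞)) ''
    {k : ℕ | ∃ U : Fin (k + 1) → Set B, (∀ i, IsOpen (U i)) ∧ (⋃ i, U i) = Set.univ ∧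
      ∀ i, ∃ s : C((U i : Set B), E), ∀ x, p (s x) = (x : B)})

/-- Property `B_m`. -/
def NullProp {X : Type u} [TopologicalSpace X] (m : ℕ) (U : Set X) : Prop :=
  ∀ K : CWComplex.{u}, CWDimLE K m → ∀ φ : C(CWSpace K, U),
    ((inclMap U).comp φ).Nullhomotopic

/-- The `m`-dimensional Lusternik–Schnirelmann category. -/
noncomputable def catm (X : Type u) [TopologicalSpace X] (m : ℕ) : ℕ∞ :=
  sInf ((fun n : ℕ => (n : ℕ∞)) ''
    {k : ℕ | ∃ U : Fin (k + 1) → Set X, (∀ i, IsOpen (U i)) ∧ (⋃ i, U i) = Set.univ ∧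
      ∀ i, NullProp m (U i)})

/-- Classical (normalized) LS category. -/
noncomputable def catLS (X : Type u) [TopologicalSpace X] : ℕ∞ :=
  sInf ((fun n : ℕ => (n : ℕ∞)) ''
    {k : ℕ | ∃ U : Fin (k + 1) → Set X, (∀ i, IsOpen (U i)) ∧ (⋃ i, U i) = Set.univ ∧
      ∀ i, (inclMap (U i)).Nullhomotopic})

/-- Property `C_{m,f}`. -/
def NullPropMap {X Y : Type u} [TopologicalSpace X] [TopologicalSpace Y]
    (f : C(X, Y)) (m : ℕ) (U : Set X) : Prop :=
  ∀ K : CWComplex.{u}, CWDimLE K m → ∀ φ : C(CWSpace K, U),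
    ((f.comp (inclMap U)).comp φ).Nullhomotopic

/-- The `m`-dimensional LS category of a map. -/
noncomputable def catmMap {X Y : Type u} [TopologicalSpace X] [TopologicalSpace Y]
    (f : C(X, Y)) (m : ℕ) : ℕ∞ :=
  sInf ((fun n : ℕ => (n : ℕ∞)) ''
    {k : ℕ | ∃ U : Fin (k + 1) → Set X, (∀ i, IsOpen (U i)) ∧ (⋃ i, U i) = Set.univ ∧
      ∀ i, NullPropMap f m (U i)})

/-- Property `D_{m,f,g}`. -/
def DistProp {X Y : Type u} [TopologicalSpace X] [TopologicalSpace Y]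
    (f g : C(X, Y)) (m : ℕ) (U : Set X) : Prop :=
  ∀ K : CWComplex.{u}, CWDimLE K m → ∀ φ : C(CWSpace K, U),
    ((f.comp (inclMap U)).comp φ).Homotopic ((g.comp (inclMap U)).comp φ)

/-- The `m`-homotopic distance. -/
noncomputable def homDistm {X Y : Type u} [TopologicalSpace X] [TopologicalSpace Y]
    (f g : C(X, Y)) (m : ℕ) : ℕ∞ :=
  sInf ((fun n : ℕ => (n : ℕ∞)) ''
    {k : ℕ | ∃ U : Fin (k + 1) → Set X, (∀ i, IsOpen (U i)) ∧ (⋃ i, U i) = Set.univ ∧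
      ∀ i, DistProp f g m (U i)})

lemma liftingProp_pullback {E B E' B' : Type u} [TopologicalSpace E] [TopologicalSpace B]
    [TopologicalSpace E'] [TopologicalSpace B']
    (p : C(E, B)) (p' : C(E', B')) (hp : IsFibration p)
    (f' : C(E', E)) (f : C(B', B))
    (hcomm : (p.comp f').Homotopic (f.comp p'))
    (g : C(B, B')) (hg : (f.comp g).Homotopic (ContinuousMap.id B)) (m : ℕ)
    (U' : Set B') (hU' : LiftingProp p' m U') :
    LiftingProp p m (g ⁻¹' U') := by
  intro K hK φ
  let ψ : C(CWSpace K, U') :=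
    ⟨fun x => ⟨g (φ x).1, (φ x).2⟩,
      Continuous.subtype_mk (g.continuous.comp (continuous_subtype_val.comp φ.continuous)) _⟩
  obtain ⟨s', hs'⟩ := hU' K hK ψ
  have h1 : (p.comp (f'.comp s')).Homotopic ((inclMap (g ⁻¹' U')).comp φ) := by
    have e1 : p.comp (f'.comp s') = (p.comp f').comp s' := rfl
    have e2 : (f.comp p').comp s' = (f.comp g).comp ((inclMap (g ⁻¹' U')).comp φ) := by
      ext x
      simp [inclMap, hs' x, ψ]
    have e3 : (ContinuousMap.id B).comp ((inclMap (g ⁻¹' U')).comp φ)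
        = (inclMap (g ⁻¹' U')).comp φ := ContinuousMap.id_comp _
    rw [e1, ← e3]
    exact (ContinuousMap.Homotopic.comp hcomm (ContinuousMap.Homotopic.refl s')).trans
      (e2 ▸ ContinuousMap.Homotopic.comp hg (ContinuousMap.Homotopic.refl ((inclMap (g ⁻¹' U')).comp φ)))
  obtain ⟨F⟩ := h1
  obtain ⟨H', hH', hH'0⟩ := hp (CWSpace K) (f'.comp s')
    ⟨fun z => F (z.2, z.1), F.continuous.comp (by continuity)⟩
    (fun x => F.apply_zero x)
  refine ⟨H'.comp ⟨fun x => (x, 1), by continuity⟩, fun x => ?_⟩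
  have := hH' (x, 1)
  simp only [ContinuousMap.comp_apply, ContinuousMap.coe_mk] at this ⊢
  rw [this]
  exact F.apply_one x

lemma secatm_le_aux {E B E' B' : Type u} [TopologicalSpace E] [TopologicalSpace B]
    [TopologicalSpace E'] [TopologicalSpace B']
    (p : C(E, B)) (p' : C(E', B')) (hp : IsFibration p)
    (f' : C(E', E)) (f : C(B', B))
    (hcomm : (p.comp f').Homotopic (f.comp p'))
    (g : C(B, B')) (hg : (f.comp g).Homotopic (ContinuousMap.id B)) (m : ℕ) :
    secatm p m ≤ secatm p' m := by
  apply sInf_le_sInf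
  apply Set.image_mono
  rintro k ⟨U, hUo, hUc, hUl⟩
  refine ⟨fun i => g ⁻¹' (U i), fun i => (hUo i).preimage g.continuous, ?_, fun i =>
    liftingProp_pullback p p' hp f' f hcomm g hg m (U i) (hUl i)⟩
  rw [← Set.preimage_iUnion, hUc, Set.preimage_univ]

/-- Homotopy invariance of the `m`-sectional category. -/
theorem stmt1 {E B E' B' : Type u} [TopologicalSpace E] [TopologicalSpace B]
    [TopologicalSpace E'] [TopologicalSpace B']
    (p : C(E, B)) (p' : C(E', B')) (hp : IsFibration p) (hp' : IsFibration p')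
    (f' : C(E', E)) (f : C(B', B))
    (hcomm : (p.comp f').Homotopic (f.comp p')) (m : ℕ) :
    ((∃ g : C(B, B'), (f.comp g).Homotopic (ContinuousMap.id B)) →
        secatm p m ≤ secatm p' m) ∧
    (((∃ g : C(B, B'), (f.comp g).Homotopic (ContinuousMap.id B) ∧
          (g.comp f).Homotopic (ContinuousMap.id B')) ∧
        (∃ g' : C(E, E'), (f'.comp g').Homotopic (ContinuousMap.id E))) →
      secatm p m = secatm p' m) := by
  constructor
  · rintro ⟨g, hg⟩
    exact secatm_le_aux p p' hp f' f hcomm g hg m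
  · rintro ⟨⟨g, hgf, hfg⟩, ⟨g', hg'⟩⟩
    refine le_antisymm (secatm_le_aux p p' hp f' f hcomm g hgf m) ?_
    have hcomm' : (p'.comp g').Homotopic (g.comp p) := by
      have h1 : ((g.comp f).comp (p'.comp g')).Homotopic
          ((ContinuousMap.id B').comp (p'.comp g')) :=
        ContinuousMap.Homotopic.comp hfg (ContinuousMap.Homotopic.refl _)
      have h2 : ((g.comp p).comp (f'.comp g')).Homotopic
          ((g.comp p).comp (ContinuousMap.id E)) :=
        ContinuousMap.Homotopic.comp (ContinuousMap.Homotopic.refl _) hg'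
      have h3' := ContinuousMap.Homotopic.comp
        (ContinuousMap.Homotopic.comp (ContinuousMap.Homotopic.refl g) hcomm) (ContinuousMap.Homotopic.refl g')
      have h3 : ((g.comp p).comp (f'.comp g')).Homotopic ((g.comp f).comp (p'.comp g')) := h3'
      have h4 := h1.symm.trans (h3.symm.trans h2)
      rwa [ContinuousMap.id_comp, ContinuousMap.comp_id] at h4
    exact secatm_le_aux p' p hp' g' g hcomm' f hfg m
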